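/- For fixed N_c with 1 ≤ N_c < N_f, the Zipf cache-hit probability p_h(δ) = (Σ_{f=1}^{N_c} f^(-δ))/(Σ_{n=1}^{N_f} n^(-δ)) is strictly increasing in δ > 0. -/

import Mathlib

/-!
Split the catalogue into the cached files `1, …, N_c` and the rest, with masses `A(δ)` and
`B(δ)`, so that `p_h(δ) = A(δ) / (A(δ) + B(δ))`. Monotonicity amounts to
`A(δ₁) B(δ₂) < A(δ₂) B(δ₁)`, which holds term by term: for a cached file `f` and an uncached
file `n > f`, `f^{-δ₁} n^{-δ₂} < f^{-δ₂} n^{-δ₁}` is `f^{δ₂-δ₁} < n^{δ₂-δ₁}`.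
-/

open Finset

lemma Real.rpow_neg_mul_rpow_neg_lt {x y a b : ℝ} (hx : 0 < x) (hxy : x < y) (hab : a < b) :
    x ^ (-a) * y ^ (-b) < x ^ (-b) * y ^ (-a) := by
  have hy : 0 < y := hx.trans hxy
  have hsplit : ∀ z : ℝ, 0 < z → z ^ (-a) = z ^ (-b) * z ^ (b - a) := fun z hz => by
    rw [← Real.rpow_add hz]; ring_nf
  rw [hsplit x hx, hsplit y hy, mul_right_comm, mul_assoc (x ^ (-b))]
  gcongr

lemma Finset.sum_rpow_neg_mul_sum_rpow_neg_lt {ι κ : Type*} {s : Finset ι} {t : Finset κ}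
    {x : ι → ℝ} {y : κ → ℝ} {a b : ℝ} (hs : s.Nonempty) (ht : t.Nonempty)
    (hx : ∀ i ∈ s, 0 < x i) (hxy : ∀ i ∈ s, ∀ j ∈ t, x i < y j) (hab : a < b) :
    (∑ i ∈ s, x i ^ (-a)) * ∑ j ∈ t, y j ^ (-b) <
      (∑ i ∈ s, x i ^ (-b)) * ∑ j ∈ t, y j ^ (-a) := by
  simp only [sum_mul_sum, ← sum_product']
  refine sum_lt_sum_of_nonempty (hs.product ht) fun p hp => ?_
  rw [mem_product] at hp
  exact Real.rpow_neg_mul_rpow_neg_lt (hx _ hp.1) (hxy _ hp.1 _ hp.2) hab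

lemma div_add_lt_div_add {a₁ a₂ b₁ b₂ : ℝ} (ha₁ : 0 ≤ a₁) (ha₂ : 0 < a₂) (hb₁ : 0 < b₁)
    (hb₂ : 0 ≤ b₂) (h : a₁ * b₂ < a₂ * b₁) : a₁ / (a₁ + b₁) < a₂ / (a₂ + b₂) := by
  rw [div_lt_div_iff₀ (by positivity) (by positivity)]
  linear_combination h

lemma Finset.sum_natCast_rpow_pos {s : Finset ℕ} (hs : s.Nonempty) (hpos : ∀ n ∈ s, 0 < n)
    (δ : ℝ) : 0 < ∑ n ∈ s, (n : ℝ) ^ (-δ) :=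
  sum_pos (fun n hn => Real.rpow_pos_of_pos (Nat.cast_pos.mpr (hpos n hn)) _) hs

/-- For fixed `1 ≤ N_c < N_f`, the Zipf cache-hit probability
`p_h(δ) = (Σ_{f=1}^{N_c} f^{-δ}) / (Σ_{n=1}^{N_f} n^{-δ})` is strictly
increasing in the skew parameter `δ > 0`. -/
theorem stmt_14 (Nf Nc : ℕ) (hNc : 1 ≤ Nc) (hlt : Nc < Nf) :
    ∀ δ₁ δ₂ : ℝ, 0 < δ₁ → δ₁ < δ₂ →
      (∑ f ∈ Finset.Icc 1 Nc, (f : ℝ) ^ (-δ₁)) /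
          (∑ n ∈ Finset.Icc 1 Nf, (n : ℝ) ^ (-δ₁))
        < (∑ f ∈ Finset.Icc 1 Nc, (f : ℝ) ^ (-δ₂)) /
            (∑ n ∈ Finset.Icc 1 Nf, (n : ℝ) ^ (-δ₂)) := by
  intro δ₁ δ₂ _ hδ
  have hsplit : ∀ δ : ℝ, ∑ n ∈ Icc 1 Nf, (n : ℝ) ^ (-δ) =
      ∑ f ∈ Icc 1 Nc, (f : ℝ) ^ (-δ) + ∑ n ∈ Ioc Nc Nf, (n : ℝ) ^ (-δ) := fun δ =>
    (sum_Ioc_consecutive _ Nc.zero_le hlt.le).symm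
  have hcached : (Icc 1 Nc).Nonempty := nonempty_Icc.mpr hNc
  have hrest : (Ioc Nc Nf).Nonempty := nonempty_Ioc.mpr hlt
  have hcached_pos : ∀ n ∈ Icc 1 Nc, 0 < n := fun n hn => (mem_Icc.mp hn).1
  have hrest_pos : ∀ n ∈ Ioc Nc Nf, 0 < n := fun n hn => Nc.zero_le.trans_lt (mem_Ioc.mp hn).1
  rw [hsplit, hsplit]
  refine div_add_lt_div_add (sum_natCast_rpow_pos hcached hcached_pos δ₁).le
    (sum_natCast_rpow_pos hcached hcached_pos δ₂) (sum_natCast_rpow_pos hrest hrest_pos δ₁)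
    (sum_natCast_rpow_pos hrest hrest_pos δ₂).le ?_
  refine sum_rpow_neg_mul_sum_rpow_neg_lt hcached hrest
    (fun f hf => Nat.cast_pos.mpr (hcached_pos f hf)) (fun f hf n hn => ?_) hδ
  exact_mod_cast (mem_Icc.mp hf).2.trans_lt (mem_Ioc.mp hn).1
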